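/- arXiv:0707.4673 — 5 statements merged into one kernel-verified Lean document; each statement's English description precedes it below -/
import Mathlib

section
/- Let G be a Hausdorff topological group, Γ a dense subgroup of G, ψ : Γ → Γ a group automorphism, and f : G → G a homeomorphism such that f(γh) = ψ(γ)·f(h) for all γ ∈ Γ and h ∈ G. Then the map Ψ : G → G defined by Ψ(h) = f(h)·f(1)⁻¹ is a group homomorphism (hence, being a composition of f with a right translation, a continuous bijective automorphism of G with continuous inverse), and Ψ(γ) = ψ(γ) for every γ ∈ Γ; in particular Ψ maps Γ onto Γ. -/
/-- Let `G` be a Hausdorff topological group, `Γ` a dense subgroup, `ψ` an automorphism of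
`Γ` and `f` a homeomorphism of `G` with `f (γ * h) = ψ γ * f h`.  Then
`Ψ : h ↦ f h * (f 1)⁻¹` is a group homomorphism, restricts to `ψ` on `Γ`, and maps `Γ`
onto `Γ`. -/
theorem equivariant_homeomorph_gives_automorphism {G : Type*} [Group G]
    [TopologicalSpace G] [IsTopologicalGroup G] [T2Space G]
    (Γ : Subgroup G) (hdense : Dense (Γ : Set G))
    (ψ : Γ ≃* Γ) (f : G ≃ₜ G)
    (hequiv : ∀ (γ : Γ) (h : G), f (↑γ * h) = ↑(ψ γ) * f h) :
    (∀ a b : G, f (a * b) * (f 1)⁻¹ = (f a * (f 1)⁻¹) * (f b * (f 1)⁻¹)) ∧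
    (∀ γ : Γ, f ↑γ * (f 1)⁻¹ = ↑(ψ γ)) ∧
    (fun h : G => f h * (f 1)⁻¹) '' (Γ : Set G) = (Γ : Set G) := by
  have hΓ : ∀ γ : Γ, f ↑γ * (f 1)⁻¹ = ↑(ψ γ) := by
    intro γ
    have := hequiv γ 1
    rw [mul_one] at this
    rw [this, mul_inv_cancel_right]
  have hmul : ∀ a b : G, f (a * b) * (f 1)⁻¹ = (f a * (f 1)⁻¹) * (f b * (f 1)⁻¹) := by
    intro a b
    have hc1 : Continuous fun a : G => f (a * b) * (f 1)⁻¹ := by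
      fun_prop
    have hc2 : Continuous fun a : G => (f a * (f 1)⁻¹) * (f b * (f 1)⁻¹) := by
      fun_prop
    have heq : (fun a : G => f (a * b) * (f 1)⁻¹) =
        fun a : G => (f a * (f 1)⁻¹) * (f b * (f 1)⁻¹) := by
      apply hc1.ext_on hdense hc2
      intro a ha
      dsimp only
      rw [hequiv ⟨_, ha⟩ b, hΓ ⟨_, ha⟩, mul_assoc]
    exact congrFun heq a
  refine ⟨hmul, hΓ, ?_⟩
  ext x
  constructor
  · rintro ⟨a, ha, rfl⟩
    show f a * (f 1)⁻¹ ∈ (Γ : Set G)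
    rw [hΓ ⟨_, ha⟩]
    exact (ψ ⟨_, ha⟩).2
  · intro hx
    refine ⟨↑(ψ.symm ⟨x, hx⟩), (ψ.symm ⟨x, hx⟩).2, ?_⟩
    dsimp only
    rw [hΓ (ψ.symm ⟨x, hx⟩), ψ.apply_symm_apply]
end

section
/- Let G be a Hausdorff topological group and Γ a dense subgroup of G. Let Aut(G,Γ) denote the group of automorphisms Ψ of G that are homeomorphisms and satisfy Ψ(Γ) = Γ, acting naturally on G, and let G ⋊ Aut(G,Γ) be the corresponding semidirect product, whose multiplication is (g₁, Ψ₁)(g₂, Ψ₂) = (g₁·Ψ₁(g₂), Ψ₁ ∘ Ψ₂). Let S be the group of pairs (f, ψ), with f a self-homeomorphism of G, ψ an automorphism of Γ, and f(γh) = ψ(γ)f(h) for all γ ∈ Γ, h ∈ G, under componentwise composition. Then the map sending (g, Ψ) ∈ G ⋊ Aut(G,Γ) to the pair (h ↦ Ψ(h)·g⁻¹, Ψ|_Γ) is a group isomorphism from G ⋊ Aut(G,Γ) onto S. -/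
/-- The elements of `G ⋊ Aut(G,Γ)`: pairs `(g, Ψ)` with `Ψ` a homeomorphism of `G` which
is a group automorphism mapping `Γ` onto `Γ`. -/
def semidirectCarrier (G : Type*) [Group G] [TopologicalSpace G] (Γ : Subgroup G) :=
  {p : G × (G ≃ₜ G) // (∀ a b : G, p.2 (a * b) = p.2 a * p.2 b) ∧
    p.2 '' (Γ : Set G) = (Γ : Set G)}

/-- The elements of the group `S` of pointed self-equivalences of `Γ ⋉ G`: pairs `(f, ψ)`
with `f` a self-homeomorphism of `G`, `ψ` a group automorphism of `Γ`, and
`f (γ * h) = ψ γ * f h` for all `γ ∈ Γ`, `h ∈ G`. -/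
def selfEquivCarrier (G : Type*) [Group G] [TopologicalSpace G] (Γ : Subgroup G) :=
  {q : (G ≃ₜ G) × (Γ → Γ) // (∀ γ δ : Γ, q.2 (γ * δ) = q.2 γ * q.2 δ) ∧
    Function.Bijective q.2 ∧ ∀ (γ : Γ) (h : G), q.1 (↑γ * h) = ↑(q.2 γ) * q.1 h}

section Aux

variable {G : Type*} [Group G] [TopologicalSpace G] [IsTopologicalGroup G] (Γ : Subgroup G)

omit [TopologicalSpace G] [IsTopologicalGroup G] in
lemma aux_map_one {Ψ : G → G} (hmul : ∀ a b : G, Ψ (a * b) = Ψ a * Ψ b) : Ψ 1 = 1 := by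
  have := hmul 1 1
  rw [one_mul] at this
  exact (mul_eq_left.mp this.symm)

omit [TopologicalSpace G] [IsTopologicalGroup G] in
lemma aux_map_inv {Ψ : G → G} (hmul : ∀ a b : G, Ψ (a * b) = Ψ a * Ψ b) (x : G) :
    Ψ x⁻¹ = (Ψ x)⁻¹ := by
  apply eq_inv_of_mul_eq_one_left
  rw [← hmul, inv_mul_cancel, aux_map_one hmul]

/-- The forward map. -/
def thetaMap : semidirectCarrier G Γ → selfEquivCarrier G Γ := fun a =>
  ⟨(a.1.2.trans (Homeomorph.mulRight (a.1.1)⁻¹),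
    fun γ => ⟨a.1.2 ↑γ, by
      have : a.1.2 ↑γ ∈ a.1.2 '' (Γ : Set G) := ⟨↑γ, γ.2, rfl⟩
      rwa [a.2.2] at this⟩),
   fun γ δ => Subtype.ext (a.2.1 ↑γ ↑δ),
   ⟨fun γ δ h => Subtype.ext (a.1.2.injective (congrArg Subtype.val h)),
    fun δ => by
      have : (δ : G) ∈ a.1.2 '' (Γ : Set G) := a.2.2.symm ▸ δ.2
      obtain ⟨x, hx, hx2⟩ := this
      exact ⟨⟨x, hx⟩, Subtype.ext hx2⟩⟩,
   fun γ h => by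
     show a.1.2 (↑γ * h) * (a.1.1)⁻¹ = a.1.2 ↑γ * (a.1.2 h * (a.1.1)⁻¹)
     rw [a.2.1, mul_assoc]⟩

end Aux

/-- For `G` a Hausdorff topological group and `Γ` a dense subgroup, the map sending
`(g, Ψ) ∈ G ⋊ Aut(G,Γ)` to the pair `(h ↦ Ψ h * g⁻¹, Ψ|_Γ)` is a group isomorphism onto
the group `S` of pointed self-equivalences of `Γ ⋉ G`: it is bijective and sends the
semidirect-product multiplication `(g₁, Ψ₁)(g₂, Ψ₂) = (g₁ * Ψ₁ g₂, Ψ₁ ∘ Ψ₂)` to the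
componentwise composition `(f₁, ψ₁)(f₂, ψ₂) = (f₁ ∘ f₂, ψ₁ ∘ ψ₂)`. -/
theorem semidirect_iso_selfEquiv {G : Type*} [Group G] [TopologicalSpace G]
    [IsTopologicalGroup G] [T2Space G] (Γ : Subgroup G) (hdense : Dense (Γ : Set G)) :
    ∃ Θ : semidirectCarrier G Γ → selfEquivCarrier G Γ,
      (∀ a : semidirectCarrier G Γ,
        (∀ h : G, (Θ a).1.1 h = a.1.2 h * (a.1.1)⁻¹) ∧
        (∀ γ : Γ, (↑((Θ a).1.2 γ) : G) = a.1.2 ↑γ)) ∧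
      Function.Bijective Θ ∧
      (∀ a b : semidirectCarrier G Γ,
        ∀ hab : (∀ x y : G, (b.1.2.trans a.1.2) (x * y) =
              (b.1.2.trans a.1.2) x * (b.1.2.trans a.1.2) y) ∧
            (b.1.2.trans a.1.2) '' (Γ : Set G) = (Γ : Set G),
        (Θ ⟨(a.1.1 * a.1.2 b.1.1, b.1.2.trans a.1.2), hab⟩).1 =
          ((Θ b).1.1.trans (Θ a).1.1, (Θ a).1.2 ∘ (Θ b).1.2)) := by
  refine ⟨thetaMap Γ, fun a => ⟨fun h => rfl, fun γ => rfl⟩, ⟨?_, ?_⟩, ?_⟩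
  · -- injective
    intro a b hab
    have hΨ : ∀ h : G, a.1.2 h * (a.1.1)⁻¹ = b.1.2 h * (b.1.1)⁻¹ := fun h =>
      congrFun (congrArg (fun q => (q : G → G)) (congrArg (fun q => q.1.1) hab)) h
    have h1 : (a.1.1)⁻¹ = (b.1.1)⁻¹ := by
      have := hΨ 1
      rwa [aux_map_one a.2.1, aux_map_one b.2.1, one_mul, one_mul] at this
    have hg : a.1.1 = b.1.1 := inv_injective h1
    have hΨ' : ∀ h : G, a.1.2 h = b.1.2 h := fun h => by
      have := hΨ h; rw [h1] at this; exact mul_right_cancel this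
    apply Subtype.ext
    exact Prod.ext hg (Homeomorph.ext hΨ')
  · -- surjective
    rintro ⟨⟨f, ψ⟩, hψmul, hψbij, heq⟩
    dsimp only at hψmul hψbij heq
    set Ψ : G ≃ₜ G := f.trans (Homeomorph.mulRight (f 1)⁻¹) with hΨdef
    have hΨ : ∀ h : G, Ψ h = f h * (f 1)⁻¹ := fun h => rfl
    have hΨγ : ∀ γ : Γ, Ψ ↑γ = ↑(ψ γ) := fun γ => by
      rw [hΨ]
      have := heq γ 1
      rw [mul_one] at this
      rw [this, mul_assoc, mul_inv_cancel, mul_one]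
    have hΨΓ : ∀ (γ : Γ) (h : G), Ψ (↑γ * h) = Ψ ↑γ * Ψ h := fun γ h => by
      rw [hΨ (↑γ * h), heq, mul_assoc, ← hΨ h, ← hΨγ γ]
    have hΨmul : ∀ x y : G, Ψ (x * y) = Ψ x * Ψ y := by
      intro x y
      have key : (fun x : G => Ψ (x * y)) = fun x : G => Ψ x * Ψ y := by
        apply Continuous.ext_on hdense
        · exact Ψ.continuous.comp (continuous_mul_right y)
        · exact Ψ.continuous.mul continuous_const
        · rintro x hx
          exact hΨΓ ⟨x, hx⟩ y
      exact congrFun key x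
    have hΨim : Ψ '' (Γ : Set G) = (Γ : Set G) := by
      apply Set.eq_of_subset_of_subset
      · rintro _ ⟨x, hx, rfl⟩
        rw [hΨγ ⟨x, hx⟩]
        exact (ψ ⟨x, hx⟩).2
      · intro δ hδ
        obtain ⟨γ, hγ⟩ := hψbij.2 ⟨δ, hδ⟩
        refine ⟨↑γ, γ.2, ?_⟩
        rw [hΨγ γ, hγ]
    refine ⟨⟨((f 1)⁻¹, Ψ), hΨmul, hΨim⟩, ?_⟩
    apply Subtype.ext
    apply Prod.ext
    · apply Homeomorph.ext
      intro h
      show Ψ h * ((f 1)⁻¹)⁻¹ = f h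
      rw [hΨ, inv_inv, mul_assoc, inv_mul_cancel, mul_one]
    · funext γ
      exact Subtype.ext (hΨγ γ)
  · -- multiplicativity
    intro a b hab
    apply Prod.ext
    · apply Homeomorph.ext
      intro h
      show a.1.2 (b.1.2 h) * (a.1.1 * a.1.2 b.1.1)⁻¹ =
        a.1.2 (b.1.2 h * (b.1.1)⁻¹) * (a.1.1)⁻¹
      rw [a.2.1, aux_map_inv a.2.1, mul_inv_rev, mul_assoc]
    · funext γ
      apply Subtype.ext
      rfl
end

section
/- Let α be a real number that is transcendental over ℚ, and let L be the additive subgroup of ℝ generated by 1 and α. If c is a real number such that c·x ∈ L for every x ∈ L, then c is an integer, i.e. there exists n ∈ ℤ with c = n. -/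
lemma mem_lattice_repr (α x : ℝ) (hx : x ∈ AddSubgroup.closure ({1, α} : Set ℝ)) :
    ∃ a b : ℤ, x = a + b * α := by
  induction hx using AddSubgroup.closure_induction with
  | mem y hy =>
      rcases hy with rfl | rfl
      · exact ⟨1, 0, by push_cast; ring⟩
      · exact ⟨0, 1, by push_cast; ring⟩
  | zero => exact ⟨0, 0, by push_cast; ring⟩
  | add x y _ _ hx hy =>
      obtain ⟨a, b, rfl⟩ := hx
      obtain ⟨a', b', rfl⟩ := hy
      exact ⟨a + a', b + b', by push_cast; ring⟩
  | neg x _ hx =>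
      obtain ⟨a, b, rfl⟩ := hx
      exact ⟨-a, -b, by push_cast; ring⟩

/-- For `α` transcendental over `ℚ` and `L = ℤ + ℤα ⊆ ℝ`, any real `c` with `c·L ⊆ L`
is an integer. -/
theorem multiplier_of_transcendental_lattice_is_int (α : ℝ) (hα : Transcendental ℚ α)
    (c : ℝ)
    (hc : ∀ x ∈ AddSubgroup.closure ({1, α} : Set ℝ), c * x ∈ AddSubgroup.closure ({1, α} : Set ℝ)) :
    ∃ n : ℤ, c = n := by
  have h1 : (1 : ℝ) ∈ AddSubgroup.closure ({1, α} : Set ℝ) :=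
    AddSubgroup.subset_closure (by simp)
  have hαmem : α ∈ AddSubgroup.closure ({1, α} : Set ℝ) :=
    AddSubgroup.subset_closure (by simp)
  obtain ⟨a, b, hab⟩ := mem_lattice_repr α _ (hc 1 h1)
  obtain ⟨e, f, hef⟩ := mem_lattice_repr α _ (hc α hαmem)
  rw [mul_one] at hab
  have hb : b = 0 := by
    by_contra hb
    apply hα
    refine ⟨Polynomial.C (b : ℚ) * Polynomial.X ^ 2 +
      Polynomial.C ((a : ℚ) - f) * Polynomial.X - Polynomial.C (e : ℚ), ?_, ?_⟩
    · intro h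
      have := congrArg (fun p => Polynomial.coeff p 2) h
      simp only [Polynomial.coeff_add, Polynomial.coeff_sub, Polynomial.coeff_C_mul,
        Polynomial.coeff_X_pow, Polynomial.coeff_X, Polynomial.coeff_C, Polynomial.coeff_zero,
        if_pos rfl] at this
      norm_num at this
      exact_mod_cast hb this
    · have : c * α = (a + b * α) * α := by rw [← hab]
      rw [hef] at this
      simp only [map_add, map_sub, map_mul, map_pow, Polynomial.aeval_C, Polynomial.aeval_X,
        map_intCast, map_sub, Rat.cast_intCast, eq_ratCast]
      nlinarith [this]
  refine ⟨a, ?_⟩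
  rw [hab, hb]
  push_cast; ring
end

section
/- Let α be a real number that is transcendental over ℚ, and let L be the additive subgroup of ℝ generated by 1 and α. If c is a real number such that the image of L under multiplication by c equals L (i.e. {c·x : x ∈ L} = L), then c = 1 or c = −1. -/
open Polynomial in
lemma aux_trans_coeffs (α : ℝ) (hα : Transcendental ℚ α) (p q r : ℤ)
    (h : (p : ℝ) + q * α + r * α ^ 2 = 0) : p = 0 ∧ q = 0 ∧ r = 0 := by
  set f : ℚ[X] := C (p : ℚ) + C (q : ℚ) * X + C (r : ℚ) * X ^ 2 with hf
  have haev : Polynomial.aeval α f = 0 := by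
    simp only [hf, map_add, map_mul, aeval_C, aeval_X, map_pow]
    push_cast
    push_cast at h
    convert h using 2 <;> norm_num
  have hf0 : f = 0 := by
    by_contra hne
    exact hα ⟨f, hne, haev⟩
  have h0 : f.coeff 0 = 0 := by rw [hf0]; simp
  have h1 : f.coeff 1 = 0 := by rw [hf0]; simp
  have h2 : f.coeff 2 = 0 := by rw [hf0]; simp
  simp only [hf, coeff_add, coeff_C_mul, coeff_X, coeff_C, coeff_X_pow, mul_one, mul_zero,
    if_true, if_false] at h0 h1 h2
  norm_num at h0 h1 h2
  exact ⟨by exact_mod_cast h0, by exact_mod_cast h1, by exact_mod_cast h2⟩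

lemma aux_trans_lin (α : ℝ) (hα : Transcendental ℚ α) (p q : ℤ)
    (h : (p : ℝ) + q * α = 0) : p = 0 ∧ q = 0 := by
  have := aux_trans_coeffs α hα p q 0 (by push_cast; linarith)
  exact ⟨this.1, this.2.1⟩

/-- For `α` transcendental over `ℚ` and `L = ℤ + ℤα ⊆ ℝ`, any real `c` with `c·L = L`
equals `1` or `-1`. -/
theorem multiplier_of_transcendental_lattice_eq_pm_one (α : ℝ) (hα : Transcendental ℚ α)
    (c : ℝ)
    (hc : (fun x : ℝ => c * x) '' (AddSubgroup.closure ({1, α} : Set ℝ) : Set ℝ) =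
      (AddSubgroup.closure ({1, α} : Set ℝ) : Set ℝ)) :
    c = 1 ∨ c = -1 := by
  have mem_iff : ∀ x : ℝ, x ∈ AddSubgroup.closure ({1, α} : Set ℝ) ↔
      ∃ m n : ℤ, (m : ℝ) + n * α = x := by
    intro x
    rw [AddSubgroup.mem_closure_pair]
    simp [zsmul_eq_mul]
  -- c * 1 ∈ L
  have h1 : c ∈ AddSubgroup.closure ({1, α} : Set ℝ) := by
    have : c * 1 ∈ (fun x : ℝ => c * x) '' (AddSubgroup.closure ({1, α} : Set ℝ) : Set ℝ) :=
      ⟨1, by rw [SetLike.mem_coe, mem_iff]; exact ⟨1, 0, by norm_num⟩, rfl⟩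
    rw [hc] at this
    simpa using this
  have h2 : c * α ∈ AddSubgroup.closure ({1, α} : Set ℝ) := by
    have : c * α ∈ (fun x : ℝ => c * x) '' (AddSubgroup.closure ({1, α} : Set ℝ) : Set ℝ) :=
      ⟨α, by rw [SetLike.mem_coe, mem_iff]; exact ⟨0, 1, by norm_num⟩, rfl⟩
    rw [hc] at this
    exact this
  obtain ⟨a, b, hab⟩ := (mem_iff c).1 h1
  obtain ⟨e, f, hef⟩ := (mem_iff (c * α)).1 h2
  -- bα² + (a-f)α - e = 0
  have hquad : ((-e : ℤ) : ℝ) + ((a - f : ℤ) : ℝ) * α + (b : ℝ) * α ^ 2 = 0 := by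
    have : ((a : ℝ) + b * α) * α = (e : ℝ) + f * α := by rw [hab, hef]
    push_cast
    ring_nf
    ring_nf at this
    linarith
  obtain ⟨he, haf, hb⟩ := aux_trans_coeffs α hα (-e) (a - f) b hquad
  have hb0 : (b : ℝ) = 0 := by exact_mod_cast hb
  have hca : c = (a : ℝ) := by rw [← hab, hb0]; ring
  -- 1 ∈ c·L : 1 = c(p + qα)
  have h3 : (1 : ℝ) ∈ (fun x : ℝ => c * x) '' (AddSubgroup.closure ({1, α} : Set ℝ) : Set ℝ) := by
    rw [hc, SetLike.mem_coe, mem_iff]; exact ⟨1, 0, by norm_num⟩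
  obtain ⟨x, hx, hcx⟩ := h3
  obtain ⟨p, q, hpq⟩ := (mem_iff x).1 hx
  have key : ((a * p - 1 : ℤ) : ℝ) + ((a * q : ℤ) : ℝ) * α = 0 := by
    have : c * ((p : ℝ) + q * α) = 1 := by rw [hpq]; exact hcx
    rw [hca] at this
    push_cast
    ring_nf
    ring_nf at this
    linarith
  obtain ⟨hap, _⟩ := aux_trans_lin α hα (a * p - 1) (a * q) key
  have : a * p = 1 := by omega
  rcases Int.eq_one_or_neg_one_of_mul_eq_one' this with h | h <;>
    [left; right] <;> rw [hca, h.1] <;> norm_num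
end

section
/- Let α be an irrational real number and let L be the additive subgroup of ℝ generated by 1 and α. If c is a nonzero real number such that the image of L under multiplication by c equals L, then c ∈ L, c is integral over ℤ (it is an algebraic integer), and c⁻¹ is also integral over ℤ; that is, c is an algebraic unit. -/
lemma aux_integral (α c : ℝ)
    (h1 : ∃ a b : ℤ, (a : ℝ) + b * α = c)
    (h2 : ∃ e f : ℤ, (e : ℝ) + f * α = c * α) : IsIntegral ℤ c := by
  obtain ⟨a, b, hab⟩ := h1
  obtain ⟨e, f, hef⟩ := h2
  refine ⟨Polynomial.X ^ 2 - Polynomial.C (a + f) * Polynomial.X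
      + Polynomial.C (a * f - b * e), ?_, ?_⟩
  · monicity!
  · have key : c ^ 2 - ((a : ℝ) + (f : ℝ)) * c + ((a : ℝ) * (f : ℝ) - (b : ℝ) * (e : ℝ)) = 0 := by
      linear_combination ((f : ℝ) - c) * hab - (b : ℝ) * hef
    rw [← Polynomial.aeval_def]
    simp only [map_add, map_sub, map_mul, map_pow, map_intCast, Polynomial.aeval_X,
      Polynomial.aeval_C, algebraMap_int_eq, eq_intCast]
    linear_combination key

lemma mem_L_iff (α x : ℝ) :
    x ∈ AddSubgroup.closure ({1, α} : Set ℝ) ↔ ∃ a b : ℤ, (a : ℝ) + b * α = x := by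
  rw [AddSubgroup.mem_closure_pair]
  constructor
  · rintro ⟨m, n, h⟩; exact ⟨m, n, by push_cast [zsmul_eq_mul] at h ⊢; linarith⟩
  · rintro ⟨a, b, h⟩; exact ⟨a, b, by push_cast [zsmul_eq_mul]; linarith⟩

/-- For `α` irrational and `L = ℤ + ℤα ⊆ ℝ`, a nonzero real `c` with `c·L = L` lies in
`L` and is an algebraic unit: both `c` and `c⁻¹` are integral over `ℤ`. -/
theorem multiplier_of_irrational_lattice_is_unit (α : ℝ) (hα : Irrational α)
    (c : ℝ) (hc : c ≠ 0)
    (hL : (fun x : ℝ => c * x) '' (AddSubgroup.closure ({1, α} : Set ℝ) : Set ℝ) =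
      (AddSubgroup.closure ({1, α} : Set ℝ) : Set ℝ)) :
    c ∈ AddSubgroup.closure ({1, α} : Set ℝ) ∧ IsIntegral ℤ c ∧ IsIntegral ℤ c⁻¹ := by
  have h1 : (1 : ℝ) ∈ AddSubgroup.closure ({1, α} : Set ℝ) :=
    AddSubgroup.subset_closure (by simp)
  have hαm : α ∈ AddSubgroup.closure ({1, α} : Set ℝ) :=
    AddSubgroup.subset_closure (by simp)
  -- forward: c * x ∈ L for x ∈ L
  have fwd : ∀ x ∈ AddSubgroup.closure ({1, α} : Set ℝ),
      c * x ∈ AddSubgroup.closure ({1, α} : Set ℝ) := by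
    intro x hx
    have : c * x ∈ ((AddSubgroup.closure ({1, α} : Set ℝ) : Set ℝ)) := hL ▸ ⟨x, hx, rfl⟩
    exact this
  -- backward: each y ∈ L is c * x for some x ∈ L
  have bwd : ∀ y ∈ AddSubgroup.closure ({1, α} : Set ℝ),
      c⁻¹ * y ∈ AddSubgroup.closure ({1, α} : Set ℝ) := by
    intro y hy
    have hy' : y ∈ ((AddSubgroup.closure ({1, α} : Set ℝ) : Set ℝ)) := hy
    rw [← hL] at hy'
    replace hy := hy'
    obtain ⟨x, hx, hxy⟩ := hy
    simp only at hxy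
    rw [← hxy, ← mul_assoc, inv_mul_cancel₀ hc, one_mul]
    exact hx
  have hcL : c ∈ AddSubgroup.closure ({1, α} : Set ℝ) := by
    simpa using fwd 1 h1
  refine ⟨hcL, ?_, ?_⟩
  · exact aux_integral α c ((mem_L_iff α c).mp hcL)
      ((mem_L_iff α (c * α)).mp (fwd α hαm))
  · exact aux_integral α c⁻¹ ((mem_L_iff α c⁻¹).mp (by simpa using bwd 1 h1))
      ((mem_L_iff α (c⁻¹ * α)).mp (bwd α hαm))
end
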